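/- Let a⁻ = (a₁⁻, a₂⁻, a₃⁻, a₄⁻). For every r ∈ ℛ⁻ with r > 0 and every t ∈ [0, 1], h_r(t; a⁻) ≥ 0; and for every r ∈ ℛ⁺ and every t ∈ [0, 1], h_r(t; a⁻) ≤ 0. -/

import Mathlib

noncomputable section

open Real Filter

/-- Rankin's auxiliary function `h_r(t; a) = t^r − a₁t − a₂t² − a₃t³ − a₄t⁴`,
where `t ^ r` is the real power. -/
def hfun (r a₁ a₂ a₃ a₄ t : ℝ) : ℝ :=
  t ^ r - a₁ * t - a₂ * t ^ 2 - a₃ * t ^ 3 - a₄ * t ^ 4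

def P1m (r κ η : ℝ) : ℝ := ((4 - r) * κ + (r - 2) * η) * κ ^ (r - 1) * η ^ 2

def P2m (r κ η : ℝ) : ℝ :=
  ((2 * r - 8) * κ ^ 2 + (1 - r) * κ * η + (1 - r) * η ^ 2) * κ ^ (r - 2) * η

def P3m (r κ η : ℝ) : ℝ :=
  ((4 - r) * κ ^ 2 + (4 - r) * κ * η + 2 * (r - 1) * η ^ 2) * κ ^ (r - 2)

def P4m (r κ η : ℝ) : ℝ := ((r - 3) * κ + (1 - r) * η) * κ ^ (r - 2)

/-- `κ₋ = 1/4`. -/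
def κm : ℝ := 1 / 4

/-- `η₋ = 3/4`. -/
def ηm : ℝ := 3 / 4

def a1m (r : ℝ) : ℝ := (P1m r κm ηm - P1m r ηm κm) / (κm - ηm) ^ 3

def a2m (r : ℝ) : ℝ := (P2m r κm ηm - P2m r ηm κm) / (κm - ηm) ^ 3

def a3m (r : ℝ) : ℝ := (P3m r κm ηm - P3m r ηm κm) / (κm - ηm) ^ 3

def a4m (r : ℝ) : ℝ := (P4m r κm ηm - P4m r ηm κm) / (κm - ηm) ^ 3

/-- `ℛ⁻ = (0,1] ∪ [2,3] ∪ [4,∞)`. -/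
def Rminus : Set ℝ := Set.Ioc 0 1 ∪ Set.Icc 2 3 ∪ Set.Ici 4

/-- `ℛ⁺ = [1,2] ∪ [3,4]`. -/
def Rplus : Set ℝ := Set.Icc 1 2 ∪ Set.Icc 3 4

/-!
For `t > 0` we have `h_r(t; a⁻) = t (g(t) - p(t))` with `g(t) = t^(r-1)`, where `p` is the cubic
Hermite interpolant of `g` at the double nodes `1/4` and `3/4`. Applying Rolle's theorem four
times to `g - p - λ (t - 1/4)² (t - 3/4)²`, with `λ` chosen so that it also vanishes at `t`, gives
the Hermite remainder `24 (g(t) - p(t)) = g⁗(ξ) (t - 1/4)² (t - 3/4)²` for some `ξ > 0`.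
Since `g⁗(ξ) = (r-1)(r-2)(r-3)(r-4) ξ^(r-5)`, the sign of `g - p` is that of
`(r-1)(r-2)(r-3)(r-4)`: nonnegative on `ℛ⁻` and nonpositive on `ℛ⁺`.
-/

open Polynomial

theorem Set.OrdConnected.exists_hasDerivAt_eq_zero {s : Set ℝ} (hs : s.OrdConnected)
    {f f' : ℝ → ℝ} (hf : ∀ x ∈ s, HasDerivAt f (f' x) x) {a b : ℝ} (ha : a ∈ s) (hb : b ∈ s)
    (hab : a < b) (hfab : f a = f b) : ∃ c ∈ Set.Ioo a b, f' c = 0 :=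
  _root_.exists_hasDerivAt_eq_zero hab
    (fun x hx ↦ (hf x (hs.out ha hb hx)).continuousAt.continuousWithinAt) hfab
    (fun x hx ↦ hf x (hs.out ha hb (Set.Ioo_subset_Icc_self hx)))

theorem Set.OrdConnected.exists_finset_hasDerivAt_eq_zero {s : Set ℝ} (hs : s.OrdConnected)
    {f f' : ℝ → ℝ} (hf : ∀ x ∈ s, HasDerivAt f (f' x) x) (Z : Finset ℝ) (hZs : ↑Z ⊆ s)
    (hZ : ∀ x ∈ Z, f x = 0) :
    ∃ W : Finset ℝ, ↑W ⊆ s ∧ Disjoint W Z ∧ Z.card ≤ W.card + 1 ∧ ∀ x ∈ W, f' x = 0 := by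
  -- The extra invariant keeps each new Rolle point, which lies above `Z.max'`, out of `W`.
  suffices ∃ W : Finset ℝ, ↑W ⊆ s ∧ Disjoint W Z ∧ Z.card ≤ W.card + 1 ∧
      (∀ x ∈ W, f' x = 0) ∧ ∀ w ∈ W, ∃ z ∈ Z, w < z by
    obtain ⟨W, hWs, hWZ, hcard, hW, -⟩ := this
    exact ⟨W, hWs, hWZ, hcard, hW⟩
  induction Z using Finset.induction_on_max with
  | empty => exact ⟨∅, by simp⟩
  | insert a Z hlt ih =>
    have hZs' : ↑Z ⊆ s := fun x hx ↦ hZs (Finset.mem_insert_of_mem hx)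
    obtain ⟨W, hWs, hWZ, hcard, hW, hWlt⟩ :=
      ih hZs' fun x hx ↦ hZ x (Finset.mem_insert_of_mem hx)
    rcases Z.eq_empty_or_nonempty with rfl | hne
    · exact ⟨∅, by simp⟩
    set b := Z.max' hne
    have hb : b ∈ Z := Z.max'_mem hne
    obtain ⟨c, ⟨hbc, hca⟩, hc⟩ := hs.exists_hasDerivAt_eq_zero hf (hZs' hb)
      (hZs (Finset.mem_insert_self a Z)) (hlt b hb)
      (by rw [hZ b (Finset.mem_insert_of_mem hb), hZ a (Finset.mem_insert_self a Z)])
    have hWc : ∀ w ∈ W, w < c := fun w hw ↦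
      let ⟨z, hz, hwz⟩ := hWlt w hw; hwz.trans_le ((Z.le_max' z hz).trans hbc.le)
    have hcZ : c ∉ Z := fun hcZ ↦ (Z.le_max' c hcZ).not_gt hbc
    have haZ : a ∉ Z := fun haZ ↦ (hlt a haZ).false
    refine ⟨insert c W, ?_, ?_, ?_, ?_, ?_⟩
    · rw [Finset.coe_insert, Set.insert_subset_iff]
      exact ⟨hs.out (hZs' hb) (hZs (Finset.mem_insert_self a Z)) ⟨hbc.le, hca.le⟩, hWs⟩
    · rw [Finset.disjoint_insert_left, Finset.disjoint_insert_right]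
      refine ⟨by simp [hca.ne, hcZ], fun haW ↦ ?_, hWZ⟩
      obtain ⟨z, hz, haz⟩ := hWlt a haW
      exact (haz.trans (hlt z hz)).false
    · rw [Finset.card_insert_of_notMem haZ, Finset.card_insert_of_notMem
        fun hcW ↦ (hWc c hcW).false]
      omega
    · simpa [hc] using hW
    · simp only [Finset.mem_insert, forall_eq_or_imp, exists_eq_or_imp]
      exact ⟨Or.inl hca, fun w hw ↦ Or.inr (hWlt w hw)⟩

theorem Set.OrdConnected.exists_finset_iterate_eq_zero {s : Set ℝ} (hs : s.OrdConnected)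
    {f : ℕ → ℝ → ℝ} (hf : ∀ k, ∀ x ∈ s, HasDerivAt (f k) (f (k + 1) x) x) (k n : ℕ)
    (Z : Finset ℝ) (hZs : ↑Z ⊆ s) (hZ : ∀ x ∈ Z, f k x = 0) :
    ∃ W : Finset ℝ, ↑W ⊆ s ∧ Z.card ≤ W.card + n ∧ ∀ x ∈ W, f (k + n) x = 0 := by
  induction n with
  | zero => exact ⟨Z, hZs, le_rfl, hZ⟩
  | succ n ih =>
    obtain ⟨W, hWs, hcard, hW⟩ := ih
    obtain ⟨W', hW's, -, hcard', hW'⟩ :=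
      hs.exists_finset_hasDerivAt_eq_zero (hf (k + n)) W hWs hW
    exact ⟨W', hW's, by omega, hW'⟩

theorem Polynomial.hasDerivAt_iterate_derivative_eval (p : ℝ[X]) (k : ℕ) (x : ℝ) :
    HasDerivAt (fun y ↦ (derivative^[k] p).eval y) ((derivative^[k + 1] p).eval x) x := by
  rw [Function.iterate_succ_apply']
  exact (derivative^[k] p).hasDerivAt x


theorem Polynomial.iterate_derivative_four_sq_mul_sq (κ η : ℝ) :
    derivative^[4] ((X - C κ) ^ 2 * (X - C η) ^ 2) = 24 := by
  simp only [sq, Function.iterate_succ, Function.iterate_zero, id_eq, Function.comp_apply,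
    derivative_mul, derivative_sub, derivative_X, derivative_C, sub_zero, one_mul, mul_one,
    derivative_add, derivative_one, add_zero, zero_mul, zero_add, mul_zero]
  ring

theorem Set.OrdConnected.exists_hermite_remainder {s : Set ℝ} (hs : s.OrdConnected)
    {g : ℕ → ℝ → ℝ} (hg : ∀ k, ∀ x ∈ s, HasDerivAt (g k) (g (k + 1) x) x) {p : ℝ[X]}
    (hp : p.natDegree ≤ 3) {κ η t : ℝ} (hκ : κ ∈ s) (hη : η ∈ s) (ht : t ∈ s) (hκη : κ ≠ η)
    (h0κ : g 0 κ = p.eval κ) (h0η : g 0 η = p.eval η)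
    (h1κ : g 1 κ = p.derivative.eval κ) (h1η : g 1 η = p.derivative.eval η) :
    ∃ ξ ∈ s, 24 * (g 0 t - p.eval t) = g 4 ξ * ((t - κ) ^ 2 * (t - η) ^ 2) := by
  by_cases htκη : t = κ ∨ t = η
  · refine ⟨κ, hκ, ?_⟩
    rcases htκη with rfl | rfl <;> simp [h0κ, h0η]
  push Not at htκη
  have hw : (t - κ) ^ 2 * (t - η) ^ 2 ≠ 0 := by
    simp [sub_eq_zero, htκη.1, htκη.2]
  set c := (g 0 t - p.eval t) / ((t - κ) ^ 2 * (t - η) ^ 2) with hc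
  set q := p + C c * ((X - C κ) ^ 2 * (X - C η) ^ 2)
  set ψ : ℕ → ℝ → ℝ := fun k x ↦ g k x - (derivative^[k] q).eval x
  have hψ : ∀ k, ∀ x ∈ s, HasDerivAt (ψ k) (ψ (k + 1) x) x := fun k x hx ↦
    (hg k x hx).sub (q.hasDerivAt_iterate_derivative_eval k x)
  have hψ0 : ∀ x ∈ ({κ, η, t} : Finset ℝ), ψ 0 x = 0 := by
    simp only [Finset.mem_insert, Finset.mem_singleton]
    rintro x (rfl | rfl | rfl)
    · simp [ψ, q, h0κ]
    · simp [ψ, q, h0η]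
    · simp [ψ, q, hc, div_mul_cancel₀ _ hw]
  obtain ⟨W, hWs, hWZ, hcard, hW⟩ :=
    hs.exists_finset_hasDerivAt_eq_zero (hψ 0) {κ, η, t}
      (by simp [Set.insert_subset_iff, hκ, hη, ht]) hψ0
  have hψ1 : ∀ x ∈ W ∪ {κ, η}, ψ 1 x = 0 := by
    simp only [Finset.mem_union, Finset.mem_insert, Finset.mem_singleton]
    rintro x (hx | rfl | rfl)
    · exact hW x hx
    · simp [ψ, q, h1κ, derivative_mul, derivative_pow]
    · simp [ψ, q, h1η, derivative_mul, derivative_pow]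
  obtain ⟨V, hVs, hVcard, hV⟩ := hs.exists_finset_iterate_eq_zero hψ 1 3 (W ∪ {κ, η})
    (by simp [Set.insert_subset_iff, hWs, hκ, hη]) hψ1
  have h3 : ({κ, η, t} : Finset ℝ).card = 3 := by
    rw [Finset.card_insert_of_notMem (by simp [hκη, htκη.1.symm]),
      Finset.card_pair htκη.2.symm]
  have h4 : (W ∪ {κ, η}).card = W.card + 2 := by
    rw [Finset.card_union_of_disjoint (hWZ.mono_right (by simp [Finset.insert_subset_iff])),
      Finset.card_pair hκη]
  obtain ⟨ξ, hξ⟩ : V.Nonempty := Finset.card_pos.mp (by omega)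
  have hq4 : (derivative^[4] q).eval ξ = 24 * c := by
    rw [iterate_map_add, iterate_derivative_C_mul, iterate_derivative_four_sq_mul_sq,
      iterate_derivative_eq_zero (by omega), zero_add, eval_mul, eval_C, eval_ofNat, mul_comm]
  refine ⟨ξ, hVs hξ, ?_⟩
  have := hV ξ hξ
  simp only [ψ, hq4, sub_eq_zero] at this
  rw [this, hc, mul_assoc, div_mul_cancel₀ _ hw]

theorem hasDerivAt_descPochhammer_eval_mul_rpow (r : ℝ) (k : ℕ) {x : ℝ} (hx : x ≠ 0) :
    HasDerivAt (fun y ↦ (descPochhammer ℝ k).eval r * y ^ (r - k))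
      ((descPochhammer ℝ (k + 1)).eval r * x ^ (r - ↑(k + 1))) x := by
  rw [descPochhammer_succ_eval, Nat.cast_succ, sub_add_eq_sub_sub, mul_assoc]
  exact (Real.hasDerivAt_rpow_const (Or.inl hx)).const_mul _

def hermiteCubic (r κ η : ℝ) : ℝ[X] :=
  C ((P1m r κ η - P1m r η κ) / (κ - η) ^ 3) + C ((P2m r κ η - P2m r η κ) / (κ - η) ^ 3) * X +
    C ((P3m r κ η - P3m r η κ) / (κ - η) ^ 3) * X ^ 2 +
    C ((P4m r κ η - P4m r η κ) / (κ - η) ^ 3) * X ^ 3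

theorem natDegree_hermiteCubic_le (r κ η : ℝ) : (hermiteCubic r κ η).natDegree ≤ 3 := by
  unfold hermiteCubic
  compute_degree

theorem hermiteCubic_comm (r κ η : ℝ) : hermiteCubic r η κ = hermiteCubic r κ η := by
  have h : (η - κ) ^ 3 = -(κ - η) ^ 3 := by ring
  simp only [hermiteCubic, h, div_neg, ← neg_div, neg_sub]

theorem eval_hermiteCubic_left (r : ℝ) {κ η : ℝ} (hκ : κ ≠ 0) (hη : η ≠ 0) (hκη : κ ≠ η) :
    (hermiteCubic r κ η).eval κ = κ ^ (r - 1) := by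
  have hκη' : κ - η ≠ 0 := sub_ne_zero.mpr hκη
  simp only [hermiteCubic, P1m, P2m, P3m, P4m, eval_add, eval_mul, eval_C, eval_X, eval_pow]
  rw [show r - 1 = r - 2 + 1 by ring, Real.rpow_add_one hκ, Real.rpow_add_one hη]
  field_simp
  ring

theorem eval_derivative_hermiteCubic_left (r : ℝ) {κ η : ℝ} (hκη : κ ≠ η) :
    (hermiteCubic r κ η).derivative.eval κ = (r - 1) * κ ^ (r - 2) := by
  have hκη' : κ - η ≠ 0 := sub_ne_zero.mpr hκη
  simp only [hermiteCubic, P1m, P2m, P3m, P4m, derivative_add, derivative_mul, derivative_C,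
    derivative_X, derivative_X_pow, eval_add, eval_mul, eval_C, eval_X, eval_pow,
    eval_zero, eval_one]
  field_simp
  ring

theorem exists_rpow_sub_eval_hermiteCubic (r : ℝ) {κ η t : ℝ} (hκ : 0 < κ) (hη : 0 < η)
    (hκη : κ ≠ η) (ht : 0 < t) :
    ∃ ξ > 0, 24 * (t ^ (r - 1) - (hermiteCubic r κ η).eval t) =
      (descPochhammer ℝ 4).eval (r - 1) * ξ ^ (r - 5) * ((t - κ) ^ 2 * (t - η) ^ 2) := by
  have hderiv : ∀ k, ∀ x ∈ Set.Ioi (0 : ℝ), HasDerivAt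
      (fun y ↦ (descPochhammer ℝ k).eval (r - 1) * y ^ (r - 1 - k))
      ((descPochhammer ℝ (k + 1)).eval (r - 1) * x ^ (r - 1 - ↑(k + 1))) x :=
    fun k x hx ↦ hasDerivAt_descPochhammer_eval_mul_rpow (r - 1) k (ne_of_gt hx)
  have hrpow : ∀ x : ℝ, x ^ (r - 1 - 1) = x ^ (r - 2) := fun x ↦ by norm_num [sub_sub]
  obtain ⟨ξ, hξ, h⟩ := Set.ordConnected_Ioi.exists_hermite_remainder hderiv
    (natDegree_hermiteCubic_le r κ η) hκ hη ht hκη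
    (by simp [eval_hermiteCubic_left r hκ.ne' hη.ne' hκη])
    (by simp [hermiteCubic_comm r κ η ▸ eval_hermiteCubic_left r hη.ne' hκ.ne' hκη.symm])
    (by simp [eval_derivative_hermiteCubic_left r hκη, hrpow])
    (by simp [hermiteCubic_comm r κ η ▸ eval_derivative_hermiteCubic_left r hκη.symm, hrpow])
  refine ⟨ξ, hξ, ?_⟩
  simpa [show r - 1 - 4 = r - 5 by ring] using h

theorem eval_descPochhammer_four (x : ℝ) :
    (descPochhammer ℝ 4).eval x = x * (x - 1) * ((x - 2) * (x - 3)) := by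
  simp only [descPochhammer_succ_eval, descPochhammer_one, eval_X, Nat.cast_one, Nat.cast_ofNat]
  ring

theorem eval_descPochhammer_four_sub_one_nonneg_of_mem_Rminus {r : ℝ} (hr : r ∈ Rminus) :
    0 ≤ (descPochhammer ℝ 4).eval (r - 1) := by
  rw [eval_descPochhammer_four]
  rcases hr with (⟨-, hr⟩ | ⟨hr₂, hr₃⟩) | (hr₄ : 4 ≤ r)
  · exact mul_nonneg (mul_nonneg_of_nonpos_of_nonpos (by linarith) (by linarith))
      (mul_nonneg_of_nonpos_of_nonpos (by linarith) (by linarith))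
  · exact mul_nonneg (mul_nonneg (by linarith) (by linarith))
      (mul_nonneg_of_nonpos_of_nonpos (by linarith) (by linarith))
  · exact mul_nonneg (mul_nonneg (by linarith) (by linarith))
      (mul_nonneg (by linarith) (by linarith))

theorem eval_descPochhammer_four_sub_one_nonpos_of_mem_Rplus {r : ℝ} (hr : r ∈ Rplus) :
    (descPochhammer ℝ 4).eval (r - 1) ≤ 0 := by
  rw [eval_descPochhammer_four]
  rcases hr with ⟨hr₁, hr₂⟩ | ⟨hr₃, hr₄⟩
  · exact mul_nonpos_of_nonpos_of_nonneg (mul_nonpos_of_nonneg_of_nonpos (by linarith)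
      (by linarith)) (mul_nonneg_of_nonpos_of_nonpos (by linarith) (by linarith))
  · exact mul_nonpos_of_nonneg_of_nonpos (mul_nonneg (by linarith) (by linarith))
      (mul_nonpos_of_nonneg_of_nonpos (by linarith) (by linarith))

theorem pos_of_mem_Rplus {r : ℝ} (hr : r ∈ Rplus) : 0 < r := by
  rcases hr with ⟨hr, -⟩ | ⟨hr, -⟩ <;> linarith

theorem hfun_zero_right (a₁ a₂ a₃ a₄ : ℝ) {r : ℝ} (hr : r ≠ 0) : hfun r a₁ a₂ a₃ a₄ 0 = 0 := by
  simp [hfun, Real.zero_rpow hr]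

theorem hfun_eq_mul_rpow_sub (a₁ a₂ a₃ a₄ : ℝ) {r t : ℝ} (ht : t ≠ 0) :
    hfun r a₁ a₂ a₃ a₄ t = t * (t ^ (r - 1) - (a₁ + a₂ * t + a₃ * t ^ 2 + a₄ * t ^ 3)) := by
  rw [hfun, Real.rpow_sub_one ht]
  field_simp
  ring

theorem eval_hermiteCubic_κm_ηm (r t : ℝ) :
    (hermiteCubic r κm ηm).eval t = a1m r + a2m r * t + a3m r * t ^ 2 + a4m r * t ^ 3 := by
  simp [hermiteCubic, a1m, a2m, a3m, a4m]

/-- For `r ∈ ℛ⁻` (so in particular `r > 0`) the function `h_r(·; a⁻)` is nonnegative on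
`[0,1]`, while for `r ∈ ℛ⁺` it is nonpositive on `[0,1]`. -/
theorem hfun_sign_minus_coeffs (r t : ℝ) (ht : t ∈ Set.Icc (0 : ℝ) 1) :
    (r ∈ Rminus → 0 < r → 0 ≤ hfun r (a1m r) (a2m r) (a3m r) (a4m r) t) ∧
    (r ∈ Rplus → hfun r (a1m r) (a2m r) (a3m r) (a4m r) t ≤ 0) := by
  rcases ht.1.eq_or_lt with rfl | ht₀
  · exact ⟨fun _ hr ↦ (hfun_zero_right _ _ _ _ hr.ne').ge,
      fun hr ↦ (hfun_zero_right _ _ _ _ (pos_of_mem_Rplus hr).ne').le⟩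
  obtain ⟨ξ, hξ, hrem⟩ := exists_rpow_sub_eval_hermiteCubic r (by norm_num [κm] : 0 < κm)
    (by norm_num [ηm] : 0 < ηm) (by norm_num [κm, ηm]) ht₀
  rw [eval_hermiteCubic_κm_ηm] at hrem
  rw [hfun_eq_mul_rpow_sub _ _ _ _ ht₀.ne']
  have hξr : 0 < ξ ^ (r - 5) := Real.rpow_pos_of_pos hξ _
  have hnode : 0 ≤ (t - κm) ^ 2 * (t - ηm) ^ 2 := by positivity
  refine ⟨fun hr _ ↦ mul_nonneg ht₀.le ?_, fun hr ↦ mul_nonpos_of_nonneg_of_nonpos ht₀.le ?_⟩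
  · have hC := eval_descPochhammer_four_sub_one_nonneg_of_mem_Rminus hr
    linarith [mul_nonneg (mul_nonneg hC hξr.le) hnode]
  · have hC := eval_descPochhammer_four_sub_one_nonpos_of_mem_Rplus hr
    linarith [mul_nonpos_of_nonpos_of_nonneg (mul_nonpos_of_nonpos_of_nonneg hC hξr.le) hnode]
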